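/- arXiv:2002.11444 — 10 statements merged into one kernel-verified Lean document; each statement's English description precedes it below -/
import Mathlib

section
/- Let f be a C¹ time-varying vector field on E = EuclideanSpace ℝ (Fin n) with flow φ that is differentiable in the initial state, with derivative Dφ(t;t₀,x) whose directional curves are lifted solutions of the complete lift of f. Suppose V : ℝ × E × E → ℝ satisfies c₁‖y‖^p ≤ V(t,x,y) ≤ c₂‖y‖^p for constants c₁,c₂ > 0 and p ≥ 1, and V is nonincreasing along lifted solutions: for every lifted solution (x(·),y(·)) starting at time t₀ and every t ≥ t₀, V(t,x(t),y(t)) ≤ V(t₀,x(t₀),y(t₀)). Then for all x₁,x₂ ∈ E and all t ≥ t₀, ‖φ(t;t₀,x₁) − φ(t;t₀,x₂)‖ ≤ (c₂/c₁)^{1/p} ‖x₁ − x₂‖ (uniform global incremental stability). -/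
noncomputable section

/-- The Euclidean state space. -/
abbrev E (n : ℕ) := EuclideanSpace ℝ (Fin n)

/-- `x` is a solution of `ẋ = f(x,t)` starting at `(t₀, x₀)`. -/
def IsSolution {n : ℕ} (f : E n → ℝ → E n) (t₀ : ℝ) (x₀ : E n) (x : ℝ → E n) : Prop :=
  x t₀ = x₀ ∧ ∀ t, t₀ ≤ t → HasDerivAt x (f (x t) t) t

/-- `(x, y)` is a lifted solution of the complete lift of `f`, starting at `(t₀, x₀, y₀)`:
`ẋ = f(x,t)`, `ẏ = (D_x f(x,t)) y`. -/
def IsLiftedSolution {n : ℕ} (f : E n → ℝ → E n) (t₀ : ℝ) (x₀ y₀ : E n)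
    (x y : ℝ → E n) : Prop :=
  IsSolution f t₀ x₀ x ∧ y t₀ = y₀ ∧
    ∀ t, t₀ ≤ t → HasDerivAt y (fderiv ℝ (fun z => f z t) (x t) (y t)) t

/-- `φ` is a flow for `f`: `φ t₀ t₀ x = x` and `t ↦ φ t t₀ x` solves `ẋ = f(x,t)`. -/
def IsFlow {n : ℕ} (f : E n → ℝ → E n) (φ : ℝ → ℝ → E n → E n) : Prop :=
  ∀ t₀ x, IsSolution f t₀ x (fun t => φ t t₀ x)

/-- `φ` is differentiable in the initial state with derivative `Dφ`, and the directional
curves `t ↦ Dφ t t₀ x v` are lifted solutions of the complete lift of `f`. -/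
def FlowDiffInitial {n : ℕ} (f : E n → ℝ → E n) (φ : ℝ → ℝ → E n → E n)
    (Dφ : ℝ → ℝ → E n → (E n →L[ℝ] E n)) : Prop :=
  (∀ t t₀ x, t₀ ≤ t → HasFDerivAt (fun z => φ t t₀ z) (Dφ t t₀ x) x) ∧
  ∀ t₀ x v, IsLiftedSolution f t₀ x v (fun t => φ t t₀ x) (fun t => Dφ t t₀ x v)

/-- If a Finsler–Lyapunov function `V` with bounds `c₁‖y‖^p ≤ V ≤ c₂‖y‖^p` is nonincreasing
along lifted solutions of the complete lift of `f`, then the system is uniformly globally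
incrementally stable:
`‖φ(t;t₀,x₁) − φ(t;t₀,x₂)‖ ≤ (c₂/c₁)^{1/p} ‖x₁ − x₂‖`. -/
theorem ugis_of_flf_nonincreasing {n : ℕ} (f : E n → ℝ → E n)
    (hf : ∀ t, ContDiff ℝ 1 (fun z => f z t))
    (φ : ℝ → ℝ → E n → E n) (Dφ : ℝ → ℝ → E n → (E n →L[ℝ] E n))
    (hφ : IsFlow f φ) (hDφ : FlowDiffInitial f φ Dφ)
    (V : ℝ → E n → E n → ℝ) (c₁ c₂ p : ℝ)
    (hc₁ : 0 < c₁) (hc₂ : 0 < c₂) (hp : 1 ≤ p)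
    (hVlow : ∀ t x y, c₁ * ‖y‖ ^ p ≤ V t x y)
    (hVup : ∀ t x y, V t x y ≤ c₂ * ‖y‖ ^ p)
    (hVdec : ∀ (t₀ : ℝ) (x₀ y₀ : E n) (x y : ℝ → E n),
      IsLiftedSolution f t₀ x₀ y₀ x y →
      ∀ t, t₀ ≤ t → V t (x t) (y t) ≤ V t₀ x₀ y₀) :
    ∀ (t₀ t : ℝ) (x₁ x₂ : E n), t₀ ≤ t →
      ‖φ t t₀ x₁ - φ t t₀ x₂‖ ≤ (c₂ / c₁) ^ (1 / p) * ‖x₁ - x₂‖ := by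

  intro t₀ t x₁ x₂ ht
  have hp0 : 0 < p := lt_of_lt_of_le one_pos hp
  set K : ℝ := (c₂ / c₁) ^ (1 / p) with hK
  have hK0 : 0 ≤ K := Real.rpow_nonneg (le_of_lt (div_pos hc₂ hc₁)) _
  -- pointwise bound on the derivative
  have hbound : ∀ x, ‖Dφ t t₀ x‖ ≤ K := by
    intro x
    apply ContinuousLinearMap.opNorm_le_bound _ hK0
    intro v
    have hls := hDφ.2 t₀ x v
    have hdec := hVdec t₀ x v _ _ hls t ht
    have h1 : c₁ * ‖Dφ t t₀ x v‖ ^ p ≤ c₂ * ‖v‖ ^ p :=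
      le_trans (hVlow t _ _) (le_trans hdec (hVup t₀ x v))
    have h2 : ‖Dφ t t₀ x v‖ ^ p ≤ (c₂ / c₁) * ‖v‖ ^ p := by
      rw [div_mul_eq_mul_div, le_div_iff₀ hc₁]
      linarith [h1]
    have h3 := Real.rpow_le_rpow (Real.rpow_nonneg (norm_nonneg _) p) h2
      (le_of_lt (by positivity : (0:ℝ) < 1 / p))
    rwa [Real.mul_rpow (le_of_lt (div_pos hc₂ hc₁)) (Real.rpow_nonneg (norm_nonneg _) p),
      one_div, Real.rpow_rpow_inv (norm_nonneg _) (ne_of_gt hp0),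
      Real.rpow_rpow_inv (norm_nonneg _) (ne_of_gt hp0), ← one_div] at h3
  -- mean value inequality
  have := Convex.norm_image_sub_le_of_norm_hasFDerivWithin_le
    (f := fun z => φ t t₀ z) (f' := fun z => Dφ t t₀ z) (s := Set.univ)
    (fun x _ => ((hDφ.1 t t₀ x ht).hasFDerivWithinAt)) (fun x _ => hbound x)
    convex_univ (Set.mem_univ x₂) (Set.mem_univ x₁)
  exact this
end
end

section
/- Let f be a C¹ time-varying vector field on E = EuclideanSpace ℝ (Fin n) with flow φ that is differentiable in the initial state, with derivative Dφ(t;t₀,x) whose directional curves are lifted solutions of the complete lift of f. Suppose V : ℝ × E × E → ℝ satisfies c₁‖y‖^p ≤ V(t,x,y) ≤ c₂‖y‖^p for constants c₁,c₂ > 0 and p ≥ 1, and V decays exponentially along lifted solutions: for every lifted solution (x(·),y(·)) starting at time t₀ and every t ≥ t₀, V(t,x(t),y(t)) ≤ e^{−λ(t−t₀)} V(t₀,x(t₀),y(t₀)) for some λ > 0. Then for all x₁,x₂ ∈ E and all t ≥ t₀, ‖φ(t;t₀,x₁) − φ(t;t₀,x₂)‖ ≤ (c₂/c₁)^{1/p}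 e^{−(λ/p)(t−t₀)} ‖x₁ − x₂‖ (uniform global incremental exponential stability). -/
noncomputable section

lemma root_bound {a b c₁ c₂ r p : ℝ} (ha : 0 ≤ a) (hb : 0 ≤ b)
    (hc₁ : 0 < c₁) (hc₂ : 0 < c₂) (hp : 1 ≤ p) (hr : 0 < r)
    (h : c₁ * a ^ p ≤ r * (c₂ * b ^ p)) :
    a ≤ (c₂ / c₁) ^ (1 / p) * r ^ (1 / p) * b := by
  have hp0 : 0 < p := lt_of_lt_of_le one_pos hp
  have h1 : a ^ p ≤ (c₂ / c₁ * r) * b ^ p := by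
    rw [div_mul_eq_mul_div, div_mul_eq_mul_div, le_div_iff₀ hc₁]
    nlinarith [Real.rpow_nonneg hb p]
  have h2 : (a ^ p) ^ (1/p) ≤ ((c₂ / c₁ * r) * b ^ p) ^ (1/p) :=
    Real.rpow_le_rpow (Real.rpow_nonneg ha p) h1 (by positivity)
  have key : ∀ x : ℝ, 0 ≤ x → (x ^ p) ^ (1/p) = x := fun x hx => by
    rw [← Real.rpow_mul hx, mul_one_div_cancel hp0.ne', Real.rpow_one]
  rwa [key a ha, Real.mul_rpow (by positivity) (Real.rpow_nonneg hb p),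
    Real.mul_rpow (by positivity) hr.le, key b hb] at h2

/-- If a Finsler–Lyapunov function `V` with bounds `c₁‖y‖^p ≤ V ≤ c₂‖y‖^p` decays
exponentially (with rate `λ > 0`) along lifted solutions of the complete lift of `f`,
then the system is uniformly globally incrementally exponentially stable:
`‖φ(t;t₀,x₁) − φ(t;t₀,x₂)‖ ≤ (c₂/c₁)^{1/p} e^{−(λ/p)(t−t₀)} ‖x₁ − x₂‖`. -/
theorem ugies_of_flf_exp_decay {n : ℕ} (f : E n → ℝ → E n)
    (hf : ∀ t, ContDiff ℝ 1 (fun z => f z t))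
    (φ : ℝ → ℝ → E n → E n) (Dφ : ℝ → ℝ → E n → (E n →L[ℝ] E n))
    (hφ : IsFlow f φ) (hDφ : FlowDiffInitial f φ Dφ)
    (V : ℝ → E n → E n → ℝ) (c₁ c₂ p lam : ℝ)
    (hc₁ : 0 < c₁) (hc₂ : 0 < c₂) (hp : 1 ≤ p) (hlam : 0 < lam)
    (hVlow : ∀ t x y, c₁ * ‖y‖ ^ p ≤ V t x y)
    (hVup : ∀ t x y, V t x y ≤ c₂ * ‖y‖ ^ p)
    (hVdec : ∀ (t₀ : ℝ) (x₀ y₀ : E n) (x y : ℝ → E n),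
      IsLiftedSolution f t₀ x₀ y₀ x y →
      ∀ t, t₀ ≤ t → V t (x t) (y t) ≤ Real.exp (-lam * (t - t₀)) * V t₀ x₀ y₀) :
    ∀ (t₀ t : ℝ) (x₁ x₂ : E n), t₀ ≤ t →
      ‖φ t t₀ x₁ - φ t t₀ x₂‖ ≤
        (c₂ / c₁) ^ (1 / p) * Real.exp (-(lam / p) * (t - t₀)) * ‖x₁ - x₂‖ := by
  intro t₀ t x₁ x₂ ht
  have hp0 : 0 < p := lt_of_lt_of_le one_pos hp
  set C : ℝ := (c₂ / c₁) ^ (1 / p) * Real.exp (-(lam / p) * (t - t₀)) with hC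
  have hC0 : 0 ≤ C := by positivity
  -- bound the derivative operator norm
  have hD : ∀ x : E n, ‖Dφ t t₀ x‖ ≤ C := by
    intro x
    refine ContinuousLinearMap.opNorm_le_bound _ hC0 fun v => ?_
    have hls := hDφ.2 t₀ x v
    have hdec := hVdec t₀ x v _ _ hls t ht
    have hlow := hVlow t (φ t t₀ x) (Dφ t t₀ x v)
    have hup := hVup t₀ x v
    have hrpos : (0:ℝ) < Real.exp (-lam * (t - t₀)) := Real.exp_pos _
    have h : c₁ * ‖Dφ t t₀ x v‖ ^ p ≤
        Real.exp (-lam * (t - t₀)) * (c₂ * ‖v‖ ^ p) := by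
      calc c₁ * ‖Dφ t t₀ x v‖ ^ p ≤ V t (φ t t₀ x) (Dφ t t₀ x v) := hlow
        _ ≤ Real.exp (-lam * (t - t₀)) * V t₀ x v := hdec
        _ ≤ Real.exp (-lam * (t - t₀)) * (c₂ * ‖v‖ ^ p) := by
            exact mul_le_mul_of_nonneg_left hup hrpos.le
    have := root_bound (norm_nonneg _) (norm_nonneg _) hc₁ hc₂ hp hrpos h
    have hexp : Real.exp (-lam * (t - t₀)) ^ (1 / p) =
        Real.exp (-(lam / p) * (t - t₀)) := by
      rw [← Real.exp_mul]
      congr 1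
      field_simp
    rwa [hexp] at this
  -- mean value inequality
  have := (convex_univ : Convex ℝ (Set.univ : Set (E n))).norm_image_sub_le_of_norm_hasFDerivWithin_le
    (fun x _ => (hDφ.1 t t₀ x ht).hasFDerivWithinAt)
    (fun x _ => hD x) (Set.mem_univ x₂) (Set.mem_univ x₁)
  simpa [hC, mul_assoc] using this
end
end

section
/- Let f be a C¹ time-varying vector field on E = EuclideanSpace ℝ (Fin n) with flow φ that is differentiable in the initial state, with derivative Dφ(t;t₀,x) whose directional curves are lifted solutions of the complete lift of f. Suppose V : ℝ × E × E → ℝ is continuous, satisfies c₁‖y‖^p ≤ V(t,x,y) ≤ c₂‖y‖^p for constants c₁,c₂ > 0 and p ≥ 1, and there is a class K function α such that along every lifted solution (x(·),y(·)) the upper right Dini derivative of t ↦ V(t,x(t),y(t)) is at most −α(V(t,x(t),y(t))) for all t ≥ t₀. Then there exists a class KL function β such that for all x₁,x₂ ∈ E and all t ≥ t₀, ‖φ(t;t₀,x₁) − φ(t;t₀,x₂)‖ ≤ β(‖x₁ − x₂‖, t − t₀) (uniform global incremental asymptotic stability). -/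
open scoped NNReal
open Filter

noncomputable section

/-- A class `K` function: continuous, strictly increasing, vanishing at `0`. -/
def ClassK (α : ℝ≥0 → ℝ≥0) : Prop :=
  Continuous α ∧ StrictMono α ∧ α 0 = 0

/-- A class `KL` function: class `K` in the first argument, nonincreasing and tending
to `0` at infinity in the second argument. -/
def ClassKL (β : ℝ≥0 → ℝ≥0 → ℝ≥0) : Prop :=
  (∀ s, ClassK (fun r => β r s)) ∧
  ∀ r, Antitone (fun s => β r s) ∧ Tendsto (fun s => β r s) atTop (nhds 0)

/-- The upper right Dini derivative of `g : ℝ → ℝ` at `t`. -/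
def DiniUpper (g : ℝ → ℝ) (t : ℝ) : ℝ :=
  limsup (fun h => (g (t + h) - g t) / h) (nhdsWithin 0 (Set.Ioi (0 : ℝ)))

/-!
Along a lifted solution `(x, y)`, the Dini inequality `D⁺V ≤ -α(V)` makes `V` nonincreasing,
and, as long as `V > ε`, makes it drop at rate at least `α(ε)`. With
`c₁‖y‖^p ≤ V ≤ c₂‖y‖^p` and `y(t) = Dφ(t;t₀,x) v`, this bounds `‖Dφ(t;t₀,x)‖` uniformly and
makes `D(s) = sup_{t - t₀ ≥ s} ‖Dφ(t;t₀,x)‖` tend to `0`. The mean value inequality then gives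
`‖φ(t;t₀,x₁) - φ(t;t₀,x₂)‖ ≤ D(t - t₀) ‖x₁ - x₂‖`, and `β(r, s) = r (D(s) + (1 + s)⁻¹)` is of
class `KL`.
-/

open Set Topology

section Dini

variable {g : ℝ → ℝ}

theorem eventually_lt_of_diniUpper_lt {t c : ℝ} (hc : c ≤ 0) (hlt : DiniUpper g t < c) :
    ∀ᶠ h in 𝓝[>] 0, (g (t + h) - g t) / h < c := by
  refine eventually_lt_of_limsup_lt hlt ?_
  by_contra hbdd
  -- an unbounded `limsup` is `0` in `ℝ`, which `c ≤ 0` excludes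
  rw [DiniUpper, Real.limsup_of_not_isBoundedUnder hbdd] at hlt
  exact hlt.not_ge hc

theorem image_le_of_diniUpper_lt_boundary {a b c m : ℝ} (hg : ContinuousOn g (Icc a b))
    (hc : c ≤ 0) (ha : g a ≤ m + c * a)
    (bound : ∀ s ∈ Ico a b, g s = m + c * s → DiniUpper g s < c) :
    ∀ ⦃x⦄, x ∈ Icc a b → g x ≤ m + c * x := by
  have hB : ContinuousOn (fun x => m + c * x) (Icc a b) := by fun_prop
  have hclosed : IsClosed ({x | g x ≤ m + c * x} ∩ Icc a b) := by
    rw [inter_comm]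
    exact (hg.prodMk hB).preimage_isClosed_of_isClosed isClosed_Icc
      OrderClosedTopology.isClosed_le'
  refine hclosed.Icc_subset_of_forall_exists_gt ha ?_
  rintro x ⟨hxB, hx⟩ y hy
  rcases (show g x ≤ m + c * x from hxB).lt_or_eq with hlt | heq
  · have hnear : ∀ᶠ z in 𝓝[Icc a b] x, g z < m + c * z :=
      (hg x (Ico_subset_Icc_self hx)).eventually_lt (hB x (Ico_subset_Icc_self hx)) hlt
    have hright : ∀ᶠ z in 𝓝[>] x, g z < m + c * z :=
      nhdsWithin_le_of_mem (Icc_mem_nhdsGT_of_mem hx) hnear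
    obtain ⟨z, hz, hzy⟩ := (hright.and (Ioc_mem_nhdsGT hy)).exists
    exact ⟨z, hz.le, hzy⟩
  · obtain ⟨h, hslope, hh⟩ := ((eventually_lt_of_diniUpper_lt hc (bound x hx heq)).and
      (Ioo_mem_nhdsGT (sub_pos.2 hy))).exists
    have hdrop : g (x + h) - g x < c * h := (div_lt_iff₀ hh.1).1 hslope
    refine ⟨x + h, ?_, by linarith [hh.1], by linarith [hh.2]⟩
    show g (x + h) ≤ m + c * (x + h)
    linarith

theorem antitoneOn_of_diniUpper_neg {a : ℝ} (hg : ContinuousOn g (Ici a))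
    (hg0 : ∀ t ∈ Ici a, 0 ≤ g t) (hneg : ∀ t ∈ Ici a, 0 < g t → DiniUpper g t < 0) :
    AntitoneOn g (Ici a) := by
  intro t₁ ht₁ t₂ _ h12
  refine le_of_forall_pos_le_add fun ε hε => ?_
  have hIcc : Icc t₁ t₂ ⊆ Ici a := fun s hs => le_trans ht₁ hs.1
  simpa using image_le_of_diniUpper_lt_boundary (hg.mono hIcc) le_rfl
    (m := g t₁ + ε) (by linarith)
    (fun s hs hgs => hneg s (hIcc (Ico_subset_Icc_self hs)) (by linarith [hg0 t₁ ht₁]))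
    (right_mem_Icc.2 h12)

theorem le_sub_mul_of_diniUpper_lt {a b κ : ℝ} (hab : a ≤ b) (hg : ContinuousOn g (Icc a b))
    (hκ : 0 ≤ κ) (h : ∀ s ∈ Ico a b, DiniUpper g s < -κ) : g b ≤ g a - κ * (b - a) := by
  have := image_le_of_diniUpper_lt_boundary hg (neg_nonpos.2 hκ) (m := g a + κ * a)
    (by linarith) (fun s hs _ => h s hs) (right_mem_Icc.2 hab)
  linarith

end Dini

section ClassKDecay

variable {g : ℝ → ℝ} {α : ℝ≥0 → ℝ≥0} {a : ℝ}

theorem coe_toNNReal_pos_of_strictMono (hα : StrictMono α) (hα0 : α 0 = 0) {r : ℝ}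
    (hr : 0 < r) : 0 < (α r.toNNReal : ℝ) :=
  NNReal.coe_pos.2 (hα0 ▸ hα (Real.toNNReal_pos.2 hr))

theorem antitoneOn_of_diniUpper_le_neg_classK (hg : ContinuousOn g (Ici a))
    (hg0 : ∀ t ∈ Ici a, 0 ≤ g t) (hα : StrictMono α) (hα0 : α 0 = 0)
    (hdec : ∀ t ∈ Ici a, DiniUpper g t ≤ -(α (g t).toNNReal : ℝ)) :
    AntitoneOn g (Ici a) :=
  antitoneOn_of_diniUpper_neg hg hg0 fun t ht hpos =>
    (hdec t ht).trans_lt (neg_neg_of_pos (coe_toNNReal_pos_of_strictMono hα hα0 hpos))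

theorem le_of_diniUpper_le_neg_classK (hg : ContinuousOn g (Ici a))
    (hg0 : ∀ t ∈ Ici a, 0 ≤ g t) (hα : StrictMono α) (hα0 : α 0 = 0)
    (hdec : ∀ t ∈ Ici a, DiniUpper g t ≤ -(α (g t).toNNReal : ℝ))
    {ε t : ℝ} (hε : 0 < ε) (hat : a ≤ t) (hstart : g a ≤ ε + α ε.toNNReal / 2 * (t - a)) :
    g t ≤ ε := by
  by_contra! hlt
  have hαε : 0 < (α ε.toNNReal : ℝ) := coe_toNNReal_pos_of_strictMono hα hα0 hε
  have hanti := antitoneOn_of_diniUpper_le_neg_classK hg hg0 hα hα0 hdec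
  -- while `g > ε`, the class `K` bound gives a uniform rate `α ε > α ε / 2`
  have hdrop : g t ≤ g a - α ε.toNNReal / 2 * (t - a) := by
    refine le_sub_mul_of_diniUpper_lt hat (hg.mono Icc_subset_Ici_self) (by positivity)
      fun s hs => ?_
    have hgs : ε ≤ g s := hlt.le.trans (hanti hs.1 hat hs.2.le)
    have hαs : α ε.toNNReal ≤ α (g s).toNNReal := hα.monotone (Real.toNNReal_le_toNNReal hgs)
    calc DiniUpper g s ≤ -(α (g s).toNNReal : ℝ) := hdec s hs.1
      _ ≤ -(α ε.toNNReal : ℝ) := neg_le_neg (NNReal.coe_le_coe.2 hαs)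
      _ < -(α ε.toNNReal / 2 : ℝ) := by linarith
  linarith

end ClassKDecay

theorem IsLiftedSolution.continuousOn {n : ℕ} {f : E n → ℝ → E n} {t₀ : ℝ} {x₀ y₀ : E n}
    {x y : ℝ → E n} (h : IsLiftedSolution f t₀ x₀ y₀ x y) :
    ContinuousOn (fun s => (s, x s, y s)) (Ici t₀) := by
  have hx : ContinuousOn x (Ici t₀) := fun s hs => (h.1.2 s hs).continuousAt.continuousWithinAt
  have hy : ContinuousOn y (Ici t₀) := fun s hs => (h.2.2 s hs).continuousAt.continuousWithinAt
  exact continuousOn_id.prodMk (hx.prodMk hy)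

structure IsFinslerLyapunov {n : ℕ} (f : E n → ℝ → E n) (V : ℝ → E n → E n → ℝ)
    (c₁ c₂ p : ℝ) (α : ℝ≥0 → ℝ≥0) : Prop where
  continuous : Continuous fun q : ℝ × E n × E n => V q.1 q.2.1 q.2.2
  lower : ∀ t x y, c₁ * ‖y‖ ^ p ≤ V t x y
  upper : ∀ t x y, V t x y ≤ c₂ * ‖y‖ ^ p
  diniUpper_le : ∀ (t₀ : ℝ) (x₀ y₀ : E n) (x y : ℝ → E n), IsLiftedSolution f t₀ x₀ y₀ x y →
    ∀ t, t₀ ≤ t → DiniUpper (fun s => V s (x s) (y s)) t ≤ -(α (V t (x t) (y t)).toNNReal : ℝ)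

namespace IsFinslerLyapunov

variable {n : ℕ} {f : E n → ℝ → E n} {V : ℝ → E n → E n → ℝ} {c₁ c₂ p : ℝ}
  {α : ℝ≥0 → ℝ≥0} {t₀ : ℝ} {x₀ y₀ : E n} {x y : ℝ → E n}

theorem nonneg (hV : IsFinslerLyapunov f V c₁ c₂ p α) (hc₁ : 0 ≤ c₁) (t : ℝ) (x y : E n) :
    0 ≤ V t x y :=
  (by positivity : 0 ≤ c₁ * ‖y‖ ^ p).trans (hV.lower t x y)

theorem antitoneOn (hV : IsFinslerLyapunov f V c₁ c₂ p α) (hc₁ : 0 ≤ c₁) (hα : StrictMono α)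
    (hα0 : α 0 = 0) (h : IsLiftedSolution f t₀ x₀ y₀ x y) :
    AntitoneOn (fun s => V s (x s) (y s)) (Ici t₀) :=
  antitoneOn_of_diniUpper_le_neg_classK (hV.continuous.comp_continuousOn h.continuousOn)
    (fun _ _ => hV.nonneg hc₁ _ _ _) hα hα0 (hV.diniUpper_le t₀ x₀ y₀ x y h)

theorem mul_norm_rpow_le (hV : IsFinslerLyapunov f V c₁ c₂ p α) (hc₁ : 0 ≤ c₁)
    (hα : StrictMono α) (hα0 : α 0 = 0) (h : IsLiftedSolution f t₀ x₀ y₀ x y) {t : ℝ}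
    (ht : t₀ ≤ t) : c₁ * ‖y t‖ ^ p ≤ c₂ * ‖y₀‖ ^ p :=
  calc c₁ * ‖y t‖ ^ p ≤ V t (x t) (y t) := hV.lower _ _ _
    _ ≤ V t₀ (x t₀) (y t₀) := hV.antitoneOn hc₁ hα hα0 h (mem_Ici.2 le_rfl) ht ht
    _ ≤ c₂ * ‖y₀‖ ^ p := by rw [← h.2.1]; exact hV.upper _ _ _

theorem mul_norm_rpow_le_of_le_add (hV : IsFinslerLyapunov f V c₁ c₂ p α) (hc₁ : 0 ≤ c₁)
    (hα : StrictMono α) (hα0 : α 0 = 0) (h : IsLiftedSolution f t₀ x₀ y₀ x y) {ε t : ℝ}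
    (hε : 0 < ε) (ht : t₀ ≤ t) (hstart : c₂ * ‖y₀‖ ^ p ≤ ε + α ε.toNNReal / 2 * (t - t₀)) :
    c₁ * ‖y t‖ ^ p ≤ ε := by
  have hV₀ : V t₀ (x t₀) (y t₀) ≤ c₂ * ‖y₀‖ ^ p := by rw [← h.2.1]; exact hV.upper _ _ _
  exact (hV.lower _ _ _).trans <| le_of_diniUpper_le_neg_classK
    (hV.continuous.comp_continuousOn h.continuousOn) (fun _ _ => hV.nonneg hc₁ _ _ _) hα hα0
    (hV.diniUpper_le t₀ x₀ y₀ x y h) hε ht (hV₀.trans hstart)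

variable {φ : ℝ → ℝ → E n → E n} {Dφ : ℝ → ℝ → E n → (E n →L[ℝ] E n)}

theorem opNorm_fderiv_flow_le (hV : IsFinslerLyapunov f V c₁ c₂ p α)
    (hDφ : FlowDiffInitial f φ Dφ) (hc₁ : 0 < c₁) (hc₂ : 0 ≤ c₂) (hp : 0 < p)
    (hα : StrictMono α) (hα0 : α 0 = 0) {t₀ t : ℝ} (x : E n) (ht : t₀ ≤ t) :
    ‖Dφ t t₀ x‖ ≤ (c₂ / c₁) ^ p⁻¹ := by
  refine ContinuousLinearMap.opNorm_le_of_unit_norm (by positivity) fun v hv => ?_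
  have hle := hV.mul_norm_rpow_le hc₁.le hα hα0 (hDφ.2 t₀ x v) ht
  rw [hv, Real.one_rpow, mul_one] at hle
  rw [Real.le_rpow_inv_iff_of_pos (norm_nonneg _) (by positivity) hp, le_div_iff₀ hc₁]
  linarith

theorem exists_opNorm_fderiv_flow_le (hV : IsFinslerLyapunov f V c₁ c₂ p α)
    (hDφ : FlowDiffInitial f φ Dφ) (hc₁ : 0 < c₁) (hc₂ : 0 ≤ c₂) (hp : 0 < p)
    (hα : StrictMono α) (hα0 : α 0 = 0) {δ : ℝ} (hδ : 0 < δ) :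
    ∃ T, ∀ t₀ t x, t₀ + T ≤ t → ‖Dφ t t₀ x‖ ≤ δ := by
  set ε := c₁ * δ ^ p
  have hε : 0 < ε := by positivity
  have hαε := coe_toNNReal_pos_of_strictMono hα hα0 hε
  -- by time `T` the decay rate `α ε / 2` has used up the initial bound `c₂` on `V`
  set T := 2 * c₂ / α ε.toNNReal with hTdef
  have hαT : α ε.toNNReal / 2 * T = c₂ := by rw [hTdef]; field_simp
  refine ⟨T, fun t₀ t x ht => ContinuousLinearMap.opNorm_le_of_unit_norm hδ.le fun v hv => ?_⟩
  have hstart : c₂ * ‖v‖ ^ p ≤ ε + α ε.toNNReal / 2 * (t - t₀) :=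
    calc c₂ * ‖v‖ ^ p = α ε.toNNReal / 2 * T := by rw [hv, Real.one_rpow, mul_one, hαT]
      _ ≤ α ε.toNNReal / 2 * (t - t₀) := by gcongr; linarith
      _ ≤ ε + α ε.toNNReal / 2 * (t - t₀) := le_add_of_nonneg_left hε.le
  have hT : 0 ≤ T := by positivity
  have hle := hV.mul_norm_rpow_le_of_le_add hc₁.le hα hα0 (hDφ.2 t₀ x v) hε (by linarith) hstart
  exact (Real.rpow_le_rpow_iff (norm_nonneg _) hδ.le hp).1 (le_of_mul_le_mul_left hle hc₁)

end IsFinslerLyapunov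

theorem classKL_mul {γ : ℝ≥0 → ℝ≥0} (hanti : Antitone γ) (hlim : Tendsto γ atTop (𝓝 0))
    (hpos : ∀ s, 0 < γ s) : ClassKL fun r s => r * γ s :=
  ⟨fun s => ⟨continuous_id.mul continuous_const,
      fun _ _ h => mul_lt_mul_of_pos_right h (hpos s), zero_mul _⟩,
    fun r => ⟨fun _ _ h => mul_le_mul_of_nonneg_left (hanti h) (zero_le (a := r)),
      by simpa using hlim.const_mul r⟩⟩

section SupOpNormAfter

variable {F G : Type*} [NormedAddCommGroup F] [NormedSpace ℝ F] [NormedAddCommGroup G]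
  [NormedSpace ℝ G] {DΦ : ℝ → ℝ → F → F →L[ℝ] G} {M : ℝ}

def supOpNormAfter (DΦ : ℝ → ℝ → F → F →L[ℝ] G) (s : ℝ≥0) : ℝ≥0 :=
  sSup {c | ∃ (t₀ t : ℝ) (x : F), t₀ + s ≤ t ∧ ‖DΦ t t₀ x‖₊ = c}

theorem nnnorm_le_supOpNormAfter (hM : ∀ t₀ t x, t₀ ≤ t → ‖DΦ t t₀ x‖ ≤ M) {s : ℝ≥0}
    {t₀ t : ℝ} (x : F) (hs : t₀ + s ≤ t) : ‖DΦ t t₀ x‖₊ ≤ supOpNormAfter DΦ s := by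
  refine le_csSup ⟨M.toNNReal, ?_⟩ ⟨t₀, t, x, hs, rfl⟩
  rintro _ ⟨t₀', t', x', hs', rfl⟩
  rw [← norm_toNNReal]
  exact Real.toNNReal_le_toNNReal (hM t₀' t' x' (by linarith [s.coe_nonneg]))

theorem antitone_supOpNormAfter (hM : ∀ t₀ t x, t₀ ≤ t → ‖DΦ t t₀ x‖ ≤ M) :
    Antitone (supOpNormAfter DΦ) := by
  intro s s' hss
  refine csSup_le' ?_
  rintro _ ⟨t₀, t, x, hs', rfl⟩
  exact nnnorm_le_supOpNormAfter hM x (by linarith [NNReal.coe_le_coe.2 hss])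

theorem tendsto_supOpNormAfter
    (hdecay : ∀ δ > 0, ∃ T, ∀ t₀ t x, t₀ + T ≤ t → ‖DΦ t t₀ x‖ ≤ δ) :
    Tendsto (supOpNormAfter DΦ) atTop (𝓝 0) := by
  refine NNReal.nhds_zero_basis.tendsto_right_iff.2 fun a ha => ?_
  obtain ⟨T, hT⟩ := hdecay (a / 2 : ℝ≥0) (by positivity)
  filter_upwards [eventually_ge_atTop T.toNNReal] with s hs
  refine (csSup_le' ?_).trans_lt (half_lt_self ha)
  rintro _ ⟨t₀, t, x, hst, rfl⟩
  have hTs : T ≤ s := (Real.le_coe_toNNReal T).trans (NNReal.coe_le_coe.2 hs)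
  exact_mod_cast hT t₀ t x (by linarith)

theorem exists_classKL_of_opNorm_decay {Φ : ℝ → ℝ → F → G}
    (hΦ : ∀ t t₀ x, t₀ ≤ t → HasFDerivAt (Φ t t₀) (DΦ t t₀ x) x)
    (hM : ∀ t₀ t x, t₀ ≤ t → ‖DΦ t t₀ x‖ ≤ M)
    (hdecay : ∀ δ > 0, ∃ T, ∀ t₀ t x, t₀ + T ≤ t → ‖DΦ t t₀ x‖ ≤ δ) :
    ∃ β : ℝ≥0 → ℝ≥0 → ℝ≥0, ClassKL β ∧ ∀ (t₀ t : ℝ) (x₁ x₂ : F), t₀ ≤ t →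
      ‖Φ t t₀ x₁ - Φ t t₀ x₂‖ ≤ (β ‖x₁ - x₂‖₊ (t - t₀).toNNReal : ℝ) := by
  set D := supOpNormAfter DΦ
  -- the term `(1 + s)⁻¹` keeps `β` strictly increasing in `r` where `D` vanishes
  have hinv_anti : Antitone fun s : ℝ≥0 => (1 + s)⁻¹ := fun _ _ h =>
    inv_anti₀ (by positivity) (by gcongr)
  have hinv_lim : Tendsto (fun s : ℝ≥0 => (1 + s)⁻¹) atTop (𝓝 0) :=
    (tendsto_inv_atTop_zero (𝕜 := ℝ≥0)).comp
      (tendsto_atTop_mono (fun _ => le_add_self) tendsto_id)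
  refine ⟨fun r s => r * (D s + (1 + s)⁻¹),
    classKL_mul ((antitone_supOpNormAfter hM).add hinv_anti)
      (by simpa using (tendsto_supOpNormAfter hdecay).add hinv_lim) fun s => by positivity,
    fun t₀ t x₁ x₂ ht => ?_⟩
  set s := (t - t₀).toNNReal
  have hD : ∀ z, ‖DΦ t t₀ z‖ ≤ D s := fun z => by
    have := nnnorm_le_supOpNormAfter hM z (t₀ := t₀) (t := t) (s := s)
      (by rw [Real.coe_toNNReal _ (sub_nonneg.2 ht)]; linarith)
    exact_mod_cast this
  calc ‖Φ t t₀ x₁ - Φ t t₀ x₂‖ ≤ D s * ‖x₁ - x₂‖ :=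
        convex_univ.norm_image_sub_le_of_norm_hasFDerivWithin_le
          (fun z _ => (hΦ t t₀ z ht).hasFDerivWithinAt) (fun z _ => hD z)
          (mem_univ _) (mem_univ _)
    _ ≤ ‖x₁ - x₂‖ * (D s + (1 + s)⁻¹ : ℝ≥0) := by
        rw [mul_comm]; gcongr; exact_mod_cast le_self_add
    _ = _ := by push_cast; rfl

end SupOpNormAfter

theorem ugias_of_flf_classK_decay_general {n : ℕ} (f : E n → ℝ → E n)
    (φ : ℝ → ℝ → E n → E n) (Dφ : ℝ → ℝ → E n → (E n →L[ℝ] E n))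
    (hDφ : FlowDiffInitial f φ Dφ)
    (V : ℝ → E n → E n → ℝ) (hVcont : Continuous fun q : ℝ × E n × E n => V q.1 q.2.1 q.2.2)
    (c₁ c₂ p : ℝ) (hc₁ : 0 < c₁) (hc₂ : 0 < c₂) (hp : 1 ≤ p)
    (hVlow : ∀ t x y, c₁ * ‖y‖ ^ p ≤ V t x y)
    (hVup : ∀ t x y, V t x y ≤ c₂ * ‖y‖ ^ p)
    (α : ℝ≥0 → ℝ≥0) (hα : ClassK α)
    (hVdec : ∀ (t₀ : ℝ) (x₀ y₀ : E n) (x y : ℝ → E n),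
      IsLiftedSolution f t₀ x₀ y₀ x y →
      ∀ t, t₀ ≤ t →
        DiniUpper (fun s => V s (x s) (y s)) t ≤
          -(α (V t (x t) (y t)).toNNReal : ℝ)) :
    ∃ β : ℝ≥0 → ℝ≥0 → ℝ≥0, ClassKL β ∧
      ∀ (t₀ t : ℝ) (x₁ x₂ : E n), t₀ ≤ t →
        ‖φ t t₀ x₁ - φ t t₀ x₂‖ ≤ (β ‖x₁ - x₂‖₊ (t - t₀).toNNReal : ℝ) := by
  have hV : IsFinslerLyapunov f V c₁ c₂ p α := ⟨hVcont, hVlow, hVup, hVdec⟩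
  have hp₀ : 0 < p := one_pos.trans_le hp
  obtain ⟨-, hα_mono, hα0⟩ := hα
  exact exists_classKL_of_opNorm_decay hDφ.1
    (fun _ _ x ht => hV.opNorm_fderiv_flow_le hDφ hc₁ hc₂.le hp₀ hα_mono hα0 x ht)
    (fun _ hδ => hV.exists_opNorm_fderiv_flow_le hDφ hc₁ hc₂.le hp₀ hα_mono hα0 hδ)

/-- If a continuous Finsler–Lyapunov function `V` with bounds `c₁‖y‖^p ≤ V ≤ c₂‖y‖^p`
satisfies `D⁺V ≤ −α(V)` along lifted solutions for a class `K` function `α`, then the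
system is uniformly globally incrementally asymptotically stable: there is a class `KL`
function `β` such that `‖φ(t;t₀,x₁) − φ(t;t₀,x₂)‖ ≤ β(‖x₁ − x₂‖, t − t₀)`. -/
theorem ugias_of_flf_classK_decay {n : ℕ} (f : E n → ℝ → E n)
    (hf : ∀ t, ContDiff ℝ 1 (fun z => f z t))
    (φ : ℝ → ℝ → E n → E n) (Dφ : ℝ → ℝ → E n → (E n →L[ℝ] E n))
    (hφ : IsFlow f φ) (hDφ : FlowDiffInitial f φ Dφ)
    (V : ℝ → E n → E n → ℝ) (hVcont : Continuous fun q : ℝ × E n × E n => V q.1 q.2.1 q.2.2)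
    (c₁ c₂ p : ℝ) (hc₁ : 0 < c₁) (hc₂ : 0 < c₂) (hp : 1 ≤ p)
    (hVlow : ∀ t x y, c₁ * ‖y‖ ^ p ≤ V t x y)
    (hVup : ∀ t x y, V t x y ≤ c₂ * ‖y‖ ^ p)
    (α : ℝ≥0 → ℝ≥0) (hα : ClassK α)
    (hVdec : ∀ (t₀ : ℝ) (x₀ y₀ : E n) (x y : ℝ → E n),
      IsLiftedSolution f t₀ x₀ y₀ x y →
      ∀ t, t₀ ≤ t →
        DiniUpper (fun s => V s (x s) (y s)) t ≤
          -(α (V t (x t) (y t)).toNNReal : ℝ)) :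
    ∃ β : ℝ≥0 → ℝ≥0 → ℝ≥0, ClassKL β ∧
      ∀ (t₀ t : ℝ) (x₁ x₂ : E n), t₀ ≤ t →
        ‖φ t t₀ x₁ - φ t t₀ x₂‖ ≤ (β ‖x₁ - x₂‖₊ (t - t₀).toNNReal : ℝ) :=
  ugias_of_flf_classK_decay_general f φ Dφ hDφ V hVcont c₁ c₂ p hc₁ hc₂ hp hVlow hVup α hα hVdec
end
end

section
/- Let f be a time-varying vector field on E = EuclideanSpace ℝ (Fin n) such that f(·,t) is globally Lipschitz with constant L > 0 for every t, and let φ be a flow for f defined on all of E. Assume that for each t ≥ t₀ the map z ↦ φ(t;t₀,z) is differentiable at x with Fréchet derivative Dφ(t;t₀,x). Then for every v ∈ E and every t ≥ t₀: ‖Dφ(t;t₀,x) v‖ ≥ e^{−L(t−t₀)} ‖v‖. -/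
noncomputable section

/-! Two trajectories of a field that is `L`-Lipschitz in space can approach each other at most
at rate `e^{-Lt}`: Grönwall's inequality for their difference, run backwards in time. So the flow
map `z ↦ φ(t;t₀,z)` satisfies `‖z - x‖ ≤ e^{L(t-t₀)} ‖φ(t;t₀,z) - φ(t;t₀,x)‖`, and such a lower
bound passes to the derivative by taking difference quotients along `x + s v`, `s → 0⁺`. -/

open Set Filter Topology

theorem norm_le_exp_mul_norm_of_norm_deriv_le {F : Type*} [NormedAddCommGroup F]
    [NormedSpace ℝ F] {d d' : ℝ → F} {K a b : ℝ} (hab : a ≤ b)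
    (hd : ∀ s ∈ Icc a b, HasDerivAt d (d' s) s) (bound : ∀ s ∈ Icc a b, ‖d' s‖ ≤ K * ‖d s‖) :
    ‖d a‖ ≤ Real.exp (K * (b - a)) * ‖d b‖ := by
  have reflect : ∀ s ∈ Icc a b, a + b - s ∈ Icc a b := fun s hs =>
    ⟨by linarith [hs.2], by linarith [hs.1]⟩
  have hw : ∀ s ∈ Icc a b,
      HasDerivAt (fun s => d (a + b - s)) (-d' (a + b - s)) s := fun s hs =>
    (hd _ (reflect s hs)).comp_const_sub (a + b) s
  have := norm_le_gronwallBound_of_norm_deriv_right_le (K := K) (ε := 0)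
    (fun s hs => (hw s hs).continuousAt.continuousWithinAt)
    (fun s hs => (hw s (Ico_subset_Icc_self hs)).hasDerivWithinAt) le_rfl
    (fun s hs => by simpa using bound _ (reflect s (Ico_subset_Icc_self hs))) b ⟨hab, le_rfl⟩
  simpa [gronwallBound_ε0, mul_comm] using this

theorem IsFlow.norm_sub_le_exp_mul_norm_sub {n : ℕ} {f : E n → ℝ → E n} {L : ℝ}
    (hf : ∀ (t : ℝ) (p q : E n), ‖f p t - f q t‖ ≤ L * ‖p - q‖)
    {φ : ℝ → ℝ → E n → E n} (hφ : IsFlow f φ) {t₀ t : ℝ} (ht : t₀ ≤ t) (x y : E n) :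
    ‖x - y‖ ≤ Real.exp (L * (t - t₀)) * ‖φ t t₀ x - φ t t₀ y‖ := by
  have h := norm_le_exp_mul_norm_of_norm_deriv_le (d := fun s => φ s t₀ x - φ s t₀ y) ht
    (fun s hs => ((hφ t₀ x).2 s hs.1).sub ((hφ t₀ y).2 s hs.1)) (fun s _ => hf _ _ _)
  have hx : φ t₀ t₀ x = x := (hφ t₀ x).1
  have hy : φ t₀ t₀ y = y := (hφ t₀ y).1
  rwa [hx, hy] at h

theorem HasFDerivAt.norm_le_mul_norm_apply_of_norm_sub_le {F G : Type*}
    [NormedAddCommGroup F] [NormedSpace ℝ F] [NormedAddCommGroup G] [NormedSpace ℝ G]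
    {g : F → G} {g' : F →L[ℝ] G} {x : F} (hg : HasFDerivAt g g' x) {C : ℝ}
    (h : ∀ᶠ z in 𝓝 x, ‖z - x‖ ≤ C * ‖g z - g x‖) (v : F) : ‖v‖ ≤ C * ‖g' v‖ := by
  have hslope := (hg.hasLineDerivAt v).tendsto_slope_zero_right
  have hline : Tendsto (fun s : ℝ => x + s • v) (𝓝[>] 0) (𝓝 x) := by
    have : Continuous fun s : ℝ => x + s • v := by fun_prop
    simpa using (this.tendsto 0).mono_left nhdsWithin_le_nhds
  refine ge_of_tendsto (hslope.norm.const_mul C) ?_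
  filter_upwards [hline.eventually h, self_mem_nhdsWithin] with s hs (hs0 : 0 < s)
  rw [norm_smul, norm_inv, Real.norm_of_nonneg hs0.le, ← mul_assoc, mul_comm C, mul_assoc,
    le_inv_mul_iff₀ hs0]
  simpa [norm_smul, Real.norm_of_nonneg hs0.le] using hs

theorem flow_deriv_lower_bound_general {n : ℕ} (f : E n → ℝ → E n) (L : ℝ)
    (hf : ∀ (t : ℝ) (p q : E n), ‖f p t - f q t‖ ≤ L * ‖p - q‖)
    (φ : ℝ → ℝ → E n → E n) (hφ : IsFlow f φ)
    (t₀ : ℝ) (x : E n) (Dφ : ℝ → (E n →L[ℝ] E n))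
    (hDφ : ∀ t, t₀ ≤ t → HasFDerivAt (fun z => φ t t₀ z) (Dφ t) x) :
    ∀ (v : E n) (t : ℝ), t₀ ≤ t →
      Real.exp (-L * (t - t₀)) * ‖v‖ ≤ ‖Dφ t v‖ := by
  intro v t ht
  have h := (hDφ t ht).norm_le_mul_norm_apply_of_norm_sub_le
    (Eventually.of_forall fun z => hφ.norm_sub_le_exp_mul_norm_sub hf ht z x) v
  calc Real.exp (-L * (t - t₀)) * ‖v‖
      ≤ Real.exp (-L * (t - t₀)) * (Real.exp (L * (t - t₀)) * ‖Dφ t v‖) := by gcongr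
    _ = ‖Dφ t v‖ := by rw [← mul_assoc, ← Real.exp_add]; simp

/-- If `f(·,t)` is globally Lipschitz with constant `L` and the flow map `z ↦ φ(t;t₀,z)`
is differentiable at `x` with Fréchet derivative `Dφ(t;t₀,x)`, then
`‖Dφ(t;t₀,x) v‖ ≥ e^{−L(t−t₀)} ‖v‖` for all `v` and `t ≥ t₀`. -/
theorem flow_deriv_lower_bound {n : ℕ} (f : E n → ℝ → E n) (L : ℝ) (hL : 0 < L)
    (hf : ∀ (t : ℝ) (p q : E n), ‖f p t - f q t‖ ≤ L * ‖p - q‖)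
    (φ : ℝ → ℝ → E n → E n) (hφ : IsFlow f φ)
    (t₀ : ℝ) (x : E n) (Dφ : ℝ → (E n →L[ℝ] E n))
    (hDφ : ∀ t, t₀ ≤ t → HasFDerivAt (fun z => φ t t₀ z) (Dφ t) x) :
    ∀ (v : E n) (t : ℝ), t₀ ≤ t →
      Real.exp (-L * (t - t₀)) * ‖v‖ ≤ ‖Dφ t v‖ :=
  flow_deriv_lower_bound_general f L hf φ hφ t₀ x Dφ hDφ
end
end

section
/- Let φ : ℝ → ℝ → E → E (written φ(τ;t,x)) be a map on E = EuclideanSpace ℝ (Fin n) and β : ℝ≥0 × ℝ≥0 → ℝ≥0 a function with β(0,s) = 0 for all s, such that ‖φ(τ;t,x₁) − φ(τ;t,x₂)‖ ≤ β(‖x₁ − x₂‖, τ − t) for all x₁,x₂ ∈ E and τ ≥ t. Suppose that for each s ≥ 0 the map r ↦ β(r,s) has right derivative b(s) at r = 0. If for some τ ≥ t and x ∈ E the map z ↦ φ(τ;t,z) is differentiable at x with Fréchet derivative Dφ(τ;t,x), then ‖Dφ(τ;t,x) v‖ ≤ b(τ − t) ‖v‖ for every v ∈ E; in particular the operator norm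 of Dφ(τ;t,x) is at most b(τ − t). -/
/-!
At a point of differentiability, `‖φ(x + y) − φ(x)‖ ≤ β(‖y‖, s) = (b(s) + o(1)) ‖y‖`, so `φ` is
`C`-Lipschitz at `x` for every `C > b(s)`, and the converse mean value inequality bounds `‖Dφ‖` by
every such `C`.
-/

open scoped NNReal
open Filter

noncomputable section

open scoped Topology

theorem tendsto_nnnorm_sub_self_nhdsNE {V : Type*} [NormedAddCommGroup V] (a : V) :
    Tendsto (fun x => ‖x - a‖₊) (𝓝[≠] a) (𝓝[>] 0) := by
  refine tendsto_nhdsWithin_of_tendsto_nhds_of_eventually_within _ ?_ ?_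
  · exact ((continuous_id.sub continuous_const).nnnorm.tendsto' a 0 (by simp)).mono_left
      nhdsWithin_le_nhds
  · filter_upwards [self_mem_nhdsWithin] with x hx
    exact nnnorm_pos.2 (sub_ne_zero.2 hx)

theorem nonneg_of_tendsto_div_nhdsGT {ω : ℝ≥0 → ℝ≥0} {L : ℝ}
    (hL : Tendsto (fun r : ℝ≥0 => (ω r : ℝ) / r) (𝓝[>] 0) (𝓝 L)) : 0 ≤ L :=
  ge_of_tendsto hL (Eventually.of_forall fun r => by positivity)

section

variable {V W : Type*} [NormedAddCommGroup V] [NormedAddCommGroup W]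

theorem eventually_norm_sub_le_mul_of_modulus {f : V → W} {x : V} {ω : ℝ≥0 → ℝ≥0} {L C : ℝ}
    (hω : ∀ᶠ y in 𝓝 x, ‖f y - f x‖ ≤ ω ‖y - x‖₊)
    (hL : Tendsto (fun r : ℝ≥0 => (ω r : ℝ) / r) (𝓝[>] 0) (𝓝 L)) (hLC : L < C) :
    ∀ᶠ y in 𝓝 x, ‖f y - f x‖ ≤ C * ‖y - x‖ := by
  have hsmall : ∀ᶠ y in 𝓝[≠] x, (ω ‖y - x‖₊ : ℝ) / ‖y - x‖ < C :=
    (tendsto_nnnorm_sub_self_nhdsNE x).eventually (hL.eventually (gt_mem_nhds hLC))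
  filter_upwards [hω, eventually_nhdsWithin_iff.1 hsmall] with y hy hyC
  rcases eq_or_ne y x with rfl | hne
  · simp
  have hpos : 0 < ‖y - x‖ := norm_pos_iff.2 (sub_ne_zero.2 hne)
  calc ‖f y - f x‖ ≤ ω ‖y - x‖₊ := hy
    _ ≤ C * ‖y - x‖ := ((div_lt_iff₀ hpos).1 (hyC hne)).le

variable {𝕜 : Type*} [NontriviallyNormedField 𝕜] [NormedSpace 𝕜 V] [NormedSpace 𝕜 W]

theorem HasFDerivAt.opNorm_le_of_modulus {f : V → W} {f' : V →L[𝕜] W} {x : V} {ω : ℝ≥0 → ℝ≥0}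
    {L : ℝ} (hf : HasFDerivAt f f' x) (hω : ∀ᶠ y in 𝓝 x, ‖f y - f x‖ ≤ ω ‖y - x‖₊)
    (hL : Tendsto (fun r : ℝ≥0 => (ω r : ℝ) / r) (𝓝[>] 0) (𝓝 L)) : ‖f'‖ ≤ L :=
  le_of_forall_gt_imp_ge_of_dense fun _ hLC =>
    hf.le_of_lip' ((nonneg_of_tendsto_div_nhdsGT hL).trans hLC.le)
      (eventually_norm_sub_le_mul_of_modulus hω hL hLC)

end

/-- If `‖φ(τ;t,x₁) − φ(τ;t,x₂)‖ ≤ β(‖x₁ − x₂‖, τ − t)` with `β(0,s) = 0`, the map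
`r ↦ β(r,s)` has right derivative `b(s)` at `r = 0`, and `z ↦ φ(τ;t,z)` is
differentiable at `x` with Fréchet derivative `Dφ`, then `‖Dφ v‖ ≤ b(τ − t) ‖v‖`
for every `v`; in particular `‖Dφ‖ ≤ b(τ − t)`. -/
theorem deriv_bound_of_KL_estimate {n : ℕ} (φ : ℝ → ℝ → E n → E n)
    (β : ℝ≥0 → ℝ≥0 → ℝ≥0) (b : ℝ≥0 → ℝ)
    (hβ0 : ∀ s, β 0 s = 0)
    (hβ : ∀ (t τ : ℝ) (x₁ x₂ : E n), t ≤ τ →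
      ‖φ τ t x₁ - φ τ t x₂‖ ≤ (β ‖x₁ - x₂‖₊ (τ - t).toNNReal : ℝ))
    (hβ' : ∀ s : ℝ≥0,
      Tendsto (fun h : ℝ≥0 => ((β h s : ℝ) - (β 0 s : ℝ)) / (h : ℝ))
        (nhdsWithin 0 (Set.Ioi (0 : ℝ≥0))) (nhds (b s)))
    (t τ : ℝ) (hτ : t ≤ τ) (x : E n) (Dφ : E n →L[ℝ] E n)
    (hDφ : HasFDerivAt (fun z => φ τ t z) Dφ x) :
    (∀ v : E n, ‖Dφ v‖ ≤ b (τ - t).toNNReal * ‖v‖) ∧ ‖Dφ‖ ≤ b (τ - t).toNNReal := by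
  have hnorm : ‖Dφ‖ ≤ b (τ - t).toNNReal := by
    refine hDφ.opNorm_le_of_modulus (ω := fun r => β r (τ - t).toNNReal)
      (Eventually.of_forall fun y => hβ t τ y x hτ) ?_
    simpa [hβ0] using hβ' (τ - t).toNNReal
  exact ⟨Dφ.le_of_opNorm_le hnorm, hnorm⟩
end
end

section
/- Let f be a time-varying vector field on E = EuclideanSpace ℝ (Fin n) with f(·,t) globally Lipschitz with constant L > 0 for every t, and let φ be a flow for f that is differentiable in the initial state with derivative Dφ(t;t₀,x) such that τ ↦ Dφ(τ;t,x)y is continuous for each t,x,y. Assume the incremental exponential bound ‖Dφ(τ;t,x) y‖ ≤ K e^{−λ(τ−t)} ‖y‖ and the Lipschitz lower bound ‖Dφ(τ;t,x) y‖ ≥ e^{−L(τ−t)} ‖y‖ hold for all τ ≥ t, x, y, where K ≥ 1 and λ > 0. Fix p ≥ 1 and δ > 0 and define V(t,x,y) = ∫_t^{t+δ} ‖Dφ(τ;t,x) y‖^p dτ. Then for all t, x, y: ((1 − e^{−pLδ})/(pL)) ‖y‖^p ≤ V(t,x,y) ≤ (K^p (1 − e^{−pλδ})/(pλ)) ‖y‖^p.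 -/
/-!
Both bounds are obtained by raising the pointwise estimates
`e^{-L(τ-t)} ‖y‖ ≤ ‖Dφ(τ;t,x) y‖ ≤ K e^{-λ(τ-t)} ‖y‖` to the power `p` (monotone on `[0, ∞)`)
and integrating over `[t, t + δ]`, where `∫_t^{t+δ} e^{-c(τ-t)} dτ = (1 - e^{-cδ})/c`.
-/

noncomputable section

open Real Set intervalIntegral

theorem integral_exp_neg_mul_sub {c : ℝ} (hc : c ≠ 0) (t δ : ℝ) :
    ∫ τ in t..t + δ, exp (-(c * (τ - t))) = (1 - exp (-(c * δ))) / c := by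
  have hderiv (τ : ℝ) :
      HasDerivAt (fun τ => -exp (-(c * (τ - t))) / c) (exp (-(c * (τ - t)))) τ := by
    refine ((((hasDerivAt_id τ).sub_const t).const_mul c).neg.exp.neg.div_const c).congr_deriv ?_
    field_simp
    simp
  rw [integral_eq_sub_of_hasDerivAt (fun τ _ => hderiv τ)
    (Continuous.intervalIntegrable (by fun_prop) _ _)]
  simp only [add_sub_cancel_left, sub_self, mul_zero, neg_zero, exp_zero]
  ring

theorem mul_exp_mul_rpow {a b : ℝ} (ha : 0 ≤ a) (hb : 0 ≤ b) (c s p : ℝ) :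
    (a * exp (-c * s) * b) ^ p = a ^ p * exp (-(p * c * s)) * b ^ p := by
  rw [mul_rpow (by positivity) hb, mul_rpow ha (exp_pos _).le, ← exp_mul]
  ring_nf

theorem integral_mul_exp_mul_rpow {a b : ℝ} (ha : 0 ≤ a) (hb : 0 ≤ b) {c p : ℝ}
    (hpc : p * c ≠ 0) (t δ : ℝ) :
    ∫ τ in t..t + δ, (a * exp (-c * (τ - t)) * b) ^ p
      = a ^ p * (1 - exp (-(p * c * δ))) / (p * c) * b ^ p := by
  simp_rw [mul_exp_mul_rpow ha hb, mul_comm _ (b ^ p), ← mul_assoc, integral_const_mul,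
    integral_exp_neg_mul_sub hpc]
  ring

theorem integral_rpow_mono_on {g h : ℝ → ℝ} (hg : Continuous g) (hh : Continuous h)
    {a b p : ℝ} (hab : a ≤ b) (hp : 0 ≤ p) (hg0 : ∀ τ ∈ Icc a b, 0 ≤ g τ)
    (hgh : ∀ τ ∈ Icc a b, g τ ≤ h τ) :
    ∫ τ in a..b, g τ ^ p ≤ ∫ τ in a..b, h τ ^ p :=
  integral_mono_on hab ((hg.rpow_const fun _ => Or.inr hp).intervalIntegrable _ _)
    ((hh.rpow_const fun _ => Or.inr hp).intervalIntegrable _ _)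
    fun τ hτ => rpow_le_rpow (hg0 τ hτ) (hgh τ hτ) hp

theorem candidate_flf_bounds_general {n : ℕ} (L : ℝ) (hL : 0 < L)
    (Dφ : ℝ → ℝ → E n → (E n →L[ℝ] E n))
    (hcont : ∀ (t : ℝ) (x y : E n), Continuous fun τ => Dφ τ t x y)
    (K lam : ℝ) (hK : 1 ≤ K) (hlam : 0 < lam)
    (hupper : ∀ (t τ : ℝ) (x y : E n), t ≤ τ →
      ‖Dφ τ t x y‖ ≤ K * Real.exp (-lam * (τ - t)) * ‖y‖)
    (hlower : ∀ (t τ : ℝ) (x y : E n), t ≤ τ →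
      Real.exp (-L * (τ - t)) * ‖y‖ ≤ ‖Dφ τ t x y‖)
    (p δ : ℝ) (hp : 1 ≤ p) (hδ : 0 < δ)
    (V : ℝ → E n → E n → ℝ)
    (hV : ∀ (t : ℝ) (x y : E n), V t x y = ∫ τ in t..(t + δ), ‖Dφ τ t x y‖ ^ p) :
    ∀ (t : ℝ) (x y : E n),
      (1 - Real.exp (-(p * L * δ))) / (p * L) * ‖y‖ ^ p ≤ V t x y ∧
      V t x y ≤ K ^ p * (1 - Real.exp (-(p * lam * δ))) / (p * lam) * ‖y‖ ^ p := by
  intro t x y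
  have hp0 : 0 < p := by linarith
  have htδ : t ≤ t + δ := by linarith
  have hnorm_cont : Continuous fun τ => ‖Dφ τ t x y‖ := (hcont t x y).norm
  rw [hV]
  constructor
  · calc (1 - exp (-(p * L * δ))) / (p * L) * ‖y‖ ^ p
        = ∫ τ in t..t + δ, (1 * exp (-L * (τ - t)) * ‖y‖) ^ p := by
          rw [integral_mul_exp_mul_rpow zero_le_one (norm_nonneg y) (by positivity), one_rpow,
            one_mul]
      _ ≤ _ := integral_rpow_mono_on (by fun_prop) hnorm_cont htδ hp0.le
          (fun τ _ => by positivity)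
          fun τ hτ => by simpa using hlower t τ x y hτ.1
  · calc ∫ τ in t..t + δ, ‖Dφ τ t x y‖ ^ p
        ≤ ∫ τ in t..t + δ, (K * exp (-lam * (τ - t)) * ‖y‖) ^ p :=
          integral_rpow_mono_on hnorm_cont (by fun_prop) htδ hp0.le (fun τ _ => norm_nonneg _)
            fun τ hτ => hupper t τ x y hτ.1
      _ = _ := integral_mul_exp_mul_rpow (by linarith) (norm_nonneg y) (by positivity) t δ

/-- Bounds on the candidate Finsler–Lyapunov function
`V(t,x,y) = ∫_t^{t+δ} ‖Dφ(τ;t,x) y‖^p dτ`: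
`((1 − e^{−pLδ})/(pL)) ‖y‖^p ≤ V(t,x,y) ≤ (K^p (1 − e^{−pλδ})/(pλ)) ‖y‖^p`. -/
theorem candidate_flf_bounds {n : ℕ} (f : E n → ℝ → E n) (L : ℝ) (hL : 0 < L)
    (hf : ∀ (t : ℝ) (p q : E n), ‖f p t - f q t‖ ≤ L * ‖p - q‖)
    (φ : ℝ → ℝ → E n → E n) (hφ : IsFlow f φ)
    (Dφ : ℝ → ℝ → E n → (E n →L[ℝ] E n))
    (hDφ : ∀ t t₀ x, t₀ ≤ t → HasFDerivAt (fun z => φ t t₀ z) (Dφ t t₀ x) x)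
    (hcont : ∀ (t : ℝ) (x y : E n), Continuous fun τ => Dφ τ t x y)
    (K lam : ℝ) (hK : 1 ≤ K) (hlam : 0 < lam)
    (hupper : ∀ (t τ : ℝ) (x y : E n), t ≤ τ →
      ‖Dφ τ t x y‖ ≤ K * Real.exp (-lam * (τ - t)) * ‖y‖)
    (hlower : ∀ (t τ : ℝ) (x y : E n), t ≤ τ →
      Real.exp (-L * (τ - t)) * ‖y‖ ≤ ‖Dφ τ t x y‖)
    (p δ : ℝ) (hp : 1 ≤ p) (hδ : 0 < δ)
    (V : ℝ → E n → E n → ℝ)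
    (hV : ∀ (t : ℝ) (x y : E n), V t x y = ∫ τ in t..(t + δ), ‖Dφ τ t x y‖ ^ p) :
    ∀ (t : ℝ) (x y : E n),
      (1 - Real.exp (-(p * L * δ))) / (p * L) * ‖y‖ ^ p ≤ V t x y ∧
      V t x y ≤ K ^ p * (1 - Real.exp (-(p * lam * δ))) / (p * lam) * ‖y‖ ^ p :=
  candidate_flf_bounds_general L hL Dφ hcont K lam hK hlam hupper hlower p δ hp hδ V hV
end
end

section
/- Let φ be a flow on E = EuclideanSpace ℝ (Fin n) that is differentiable in the initial state with derivative Dφ, satisfying the cocycle identity Dφ(τ;s,φ(s;t,x)) ∘ Dφ(s;t,x) = Dφ(τ;t,x) for all τ ≥ s ≥ t and all x, and such that τ ↦ ‖Dφ(τ;t,x) y‖^p is continuous. Fix p ≥ 1, δ > 0, t, x, y, and define g(s) = ∫_s^{s+δ} ‖Dφ(τ;s,φ(s;t,x)) (Dφ(s;t,x) y)‖^p dτ for s ≥ t. Then g(s) = ∫_s^{s+δ} ‖Dφ(τ;t,x) y‖^p dτ for all s ≥ t, and g has right derivative at s = t equal to ‖Dφ(t+δ;t,x) y‖^p − ‖y‖^p.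 Moreover, if additionally ‖Dφ(τ;t,x) v‖ ≤ K e^{−λ(τ−t)} ‖v‖ holds for all τ ≥ t with K ≥ 1, λ > 0 and K^p e^{−pλδ} < 1, then this derivative satisfies ‖Dφ(t+δ;t,x) y‖^p − ‖y‖^p ≤ −(1 − K^p e^{−pλδ}) ‖y‖^p. -/
/-! The cocycle identity turns the integrand of `g(s)` into `‖Dφ(τ;t,x) y‖^p`, so `g` is a sliding
window integral `∫_s^{s+δ} h` of a continuous function, whose derivative is `h(s+δ) − h(s)`;
at `s = t` we have `Dφ(t;t,x) = id` because `φ(t;t,·) = id`. -/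

noncomputable section

theorem HasFDerivAt.eq_id_of_forall_eq {𝕜 F : Type*} [NontriviallyNormedField 𝕜]
    [NormedAddCommGroup F] [NormedSpace 𝕜 F] {f : F → F} {f' : F →L[𝕜] F} {x : F}
    (hf : HasFDerivAt f f' x) (hid : ∀ z, f z = z) : f' = ContinuousLinearMap.id 𝕜 F :=
  (funext hid ▸ hf).unique (hasFDerivAt_id x)

theorem Continuous.hasDerivAt_integral_add_const {F : Type*} [NormedAddCommGroup F]
    [NormedSpace ℝ F] [CompleteSpace F] {f : ℝ → F} (hf : Continuous f) (δ s : ℝ) :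
    HasDerivAt (fun u => ∫ τ in u..(u + δ), f τ) (f (s + δ) - f s) s := by
  have hprim : ∀ u, HasDerivAt (fun v => ∫ τ in (0 : ℝ)..v, f τ) (f u) u :=
    fun u => (hf.integral_hasStrictDerivAt 0 u).hasDerivAt
  have hwindow : (fun u => ∫ τ in u..(u + δ), f τ) =
      fun u => (∫ τ in (0 : ℝ)..(u + δ), f τ) - ∫ τ in (0 : ℝ)..u, f τ := by
    funext u
    rw [intervalIntegral.integral_interval_sub_left (hf.intervalIntegrable _ _)
      (hf.intervalIntegrable _ _)]
  rw [hwindow]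
  exact ((hprim (s + δ)).comp_add_const s δ).sub (hprim s)

theorem rpow_sub_rpow_le_of_le_mul {a b c p : ℝ} (ha : 0 ≤ a) (hb : 0 ≤ b) (hc : 0 ≤ c)
    (hp : 0 ≤ p) (hab : a ≤ c * b) : a ^ p - b ^ p ≤ -(1 - c ^ p) * b ^ p := by
  have h := Real.rpow_le_rpow ha hab hp
  rw [Real.mul_rpow hc hb] at h
  linarith

/-- The candidate Finsler–Lyapunov function evaluated along the lifted flow:
`g(s) = ∫_s^{s+δ} ‖Dφ(τ;s,φ(s;t,x)) (Dφ(s;t,x) y)‖^p dτ` equals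
`∫_s^{s+δ} ‖Dφ(τ;t,x) y‖^p dτ` by the cocycle identity, has right derivative
`‖Dφ(t+δ;t,x) y‖^p − ‖y‖^p` at `s = t`, and under an exponential bound on `Dφ` this
derivative is at most `−(1 − K^p e^{−pλδ}) ‖y‖^p`. -/
theorem flf_along_flow_right_derivative {n : ℕ} (φ : ℝ → ℝ → E n → E n)
    (hφ0 : ∀ (t₀ : ℝ) (x : E n), φ t₀ t₀ x = x)
    (Dφ : ℝ → ℝ → E n → (E n →L[ℝ] E n))
    (hDφ : ∀ (t t₀ : ℝ) (x : E n), t₀ ≤ t → HasFDerivAt (fun z => φ t t₀ z) (Dφ t t₀ x) x)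
    (hcocycle : ∀ (t s τ : ℝ) (x : E n), t ≤ s → s ≤ τ →
      (Dφ τ s (φ s t x)).comp (Dφ s t x) = Dφ τ t x)
    (p δ : ℝ) (hp : 1 ≤ p) (hδ : 0 < δ)
    (t : ℝ) (x y : E n)
    (hcont : Continuous fun τ => ‖Dφ τ t x y‖ ^ p)
    (g : ℝ → ℝ)
    (hg : ∀ s, t ≤ s →
      g s = ∫ τ in s..(s + δ), ‖Dφ τ s (φ s t x) (Dφ s t x y)‖ ^ p) :
    (∀ s, t ≤ s → g s = ∫ τ in s..(s + δ), ‖Dφ τ t x y‖ ^ p) ∧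
    HasDerivWithinAt g (‖Dφ (t + δ) t x y‖ ^ p - ‖y‖ ^ p) (Set.Ici t) t ∧
    (∀ K lam : ℝ, 1 ≤ K → 0 < lam → K ^ p * Real.exp (-(p * lam * δ)) < 1 →
      (∀ (τ : ℝ) (v : E n), t ≤ τ → ‖Dφ τ t x v‖ ≤ K * Real.exp (-lam * (τ - t)) * ‖v‖) →
      ‖Dφ (t + δ) t x y‖ ^ p - ‖y‖ ^ p ≤
        -(1 - K ^ p * Real.exp (-(p * lam * δ))) * ‖y‖ ^ p) := by
  have hwindow : ∀ s, t ≤ s → g s = ∫ τ in s..(s + δ), ‖Dφ τ t x y‖ ^ p := by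
    intro s hs
    rw [hg s hs]
    refine intervalIntegral.integral_congr fun τ hτ => ?_
    rw [Set.uIcc_of_le (by linarith)] at hτ
    simp only [← hcocycle t s τ x hs hτ.1, ContinuousLinearMap.comp_apply]
  have hDφ_self : Dφ t t x = ContinuousLinearMap.id ℝ (E n) :=
    (hDφ t t x le_rfl).eq_id_of_forall_eq (hφ0 t)
  have hderiv := (hcont.hasDerivAt_integral_add_const δ t).hasDerivWithinAt (s := Set.Ici t)
  rw [hDφ_self, ContinuousLinearMap.id_apply] at hderiv
  refine ⟨hwindow, hderiv.congr (fun s hs => hwindow s hs) (hwindow t le_rfl), ?_⟩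
  intro K lam hK _ _ hbound
  have hKexp : 0 ≤ K * Real.exp (-lam * δ) := by positivity
  have hstep := hbound (t + δ) y (by linarith)
  rw [add_sub_cancel_left] at hstep
  have hpow := rpow_sub_rpow_le_of_le_mul (norm_nonneg _) (norm_nonneg y) hKexp
    (by linarith : (0 : ℝ) ≤ p) hstep
  rwa [Real.mul_rpow (by linarith) (Real.exp_pos _).le, ← Real.exp_mul,
    show -lam * δ * p = -(p * lam * δ) by ring] at hpow
end
end

section
/- Let f be a time-varying vector field on E = EuclideanSpace ℝ (Fin n) with f(·,t) C¹ for each t, and let h : E → E be a C¹ vector field such that the Lie bracket vanishes: (D_x f(x,t))(h(x)) = (Dh(x))(f(x,t)) for all x ∈ E and t ∈ ℝ. If x : ℝ → E is a solution of ẋ = f(x,t) starting at (t₀,x₀), then y(t) := h(x(t)) satisfies y(t₀) = h(x₀) and HasDerivAt y ((D_x f(x(t),t))(y(t))) t for all t ≥ t₀; that is, t ↦ (x(t), h(x(t))) is a lifted solution of the complete lift of f starting at (t₀, x₀, h(x₀)). In particular, if f is time-invariant, t ↦ (x(t), f(x(t))) is a lifted solution starting at (t₀, x₀, f(x₀)).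 -/
noncomputable section

/-- By the chain rule `d/dt h(x t) = Dh(x) f(x,t)`, which the vanishing bracket rewrites as
`D_x f(x,t) h(x)`. -/
theorem IsSolution.isLiftedSolution_comp {n : ℕ} {f : E n → ℝ → E n} {h : E n → E n}
    {t₀ : ℝ} {x₀ : E n} {x : ℝ → E n} (hx : IsSolution f t₀ x₀ x) (hh : Differentiable ℝ h)
    (hbracket : ∀ (z : E n) (t : ℝ),
      fderiv ℝ (fun w => f w t) z (h z) = fderiv ℝ h z (f z t)) :
    IsLiftedSolution f t₀ x₀ (h x₀) x (fun t => h (x t)) := by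
  obtain ⟨hx₀, hderiv⟩ := hx
  refine ⟨⟨hx₀, hderiv⟩, congrArg h hx₀, fun t ht => ?_⟩
  rw [hbracket]
  exact (hh (x t)).hasFDerivAt.comp_hasDerivAt t (hderiv t ht)

/-- If the Lie bracket `[f, h]` vanishes, i.e. `(D_x f(x,t))(h(x)) = (Dh(x))(f(x,t))`,
then `t ↦ (x(t), h(x(t)))` is a lifted solution of the complete lift of `f` along any
solution `x` of `ẋ = f(x,t)`. In particular, if `f` is time-invariant then
`t ↦ (x(t), f(x(t)))` is a lifted solution starting at `(t₀, x₀, f(x₀))`. -/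
theorem lifted_solution_of_commuting_field {n : ℕ} (f : E n → ℝ → E n)
    (hf : ∀ t, ContDiff ℝ 1 (fun z => f z t))
    (h : E n → E n) (hh : ContDiff ℝ 1 h)
    (hbracket : ∀ (x : E n) (t : ℝ),
      fderiv ℝ (fun z => f z t) x (h x) = fderiv ℝ h x (f x t))
    (t₀ : ℝ) (x₀ : E n) (x : ℝ → E n) (hx : IsSolution f t₀ x₀ x) :
    IsLiftedSolution f t₀ x₀ (h x₀) x (fun t => h (x t)) ∧
    ((∀ (z : E n) (s s' : ℝ), f z s = f z s') →
      IsLiftedSolution f t₀ x₀ (f x₀ t₀) x (fun t => f (x t) t₀)) := by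
  refine ⟨hx.isLiftedSolution_comp (hh.differentiable one_ne_zero) hbracket, fun hconst => ?_⟩
  have hslice : ∀ t, (fun z => f z t) = fun z => f z t₀ := fun t => funext fun z => hconst z t t₀
  refine hx.isLiftedSolution_comp ((hf t₀).differentiable one_ne_zero) fun z t => ?_
  rw [hslice t, hconst z t t₀]
end
end

section
/- (Classical Krasovskii method.) Let f : E → E be a C¹ vector field on E = EuclideanSpace ℝ (Fin n), and let P, Q : E →L[ℝ] E be symmetric continuous linear maps with P positive semidefinite, such that for all x ∈ E and v ∈ E: ⟪v, P (D f(x) v)⟫ + ⟪D f(x) v, P v⟫ ≤ −⟪v, Q v⟫, where D f(x) is the Fréchet derivative of f at x and ⟪·,·⟫ is the Euclidean inner product. Then along any solution x(·) of ẋ = f(x), the function V(t) = ⟪f(x(t)), P f(x(t))⟫ is differentiable with V'(t) ≤ −⟪f(x(t)), Q f(x(t))⟫ for all t in the interval of definition. -/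
open scoped RealInnerProductSpace

noncomputable section

theorem HasDerivAt.inner_clm_apply_self {F : Type*} [NormedAddCommGroup F]
    [InnerProductSpace ℝ F] {g : ℝ → F} {g' : F} {t : ℝ} (P : F →L[ℝ] F)
    (hg : HasDerivAt g g' t) :
    HasDerivAt (fun τ => ⟪g τ, P (g τ)⟫) (⟪g t, P g'⟫ + ⟪g', P (g t)⟫) t :=
  hg.inner ℝ (P.hasFDerivAt.comp_hasDerivAt t hg)

theorem classical_krasovskii_general {n : ℕ} (f : E n → E n) (hf : ContDiff ℝ 1 f)
    (P Q : E n →L[ℝ] E n)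
    (hKraso : ∀ x v : E n,
      ⟪v, P (fderiv ℝ f x v)⟫ + ⟪fderiv ℝ f x v, P v⟫ ≤ -⟪v, Q v⟫)
    (s : Set ℝ) (x : ℝ → E n) (hx : ∀ t ∈ s, HasDerivAt x (f (x t)) t) :
    ∀ t ∈ s, ∃ d : ℝ,
      HasDerivAt (fun τ => ⟪f (x τ), P (f (x τ))⟫) d t ∧
      d ≤ -⟪f (x t), Q (f (x t))⟫ := by
  intro t ht
  have hfx : HasDerivAt (fun τ => f (x τ)) (fderiv ℝ f (x t) (f (x t))) t :=
    (hf.differentiable one_ne_zero (x t)).hasFDerivAt.comp_hasDerivAt t (hx t ht)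
  exact ⟨_, hfx.inner_clm_apply_self P, hKraso (x t) (f (x t))⟩

/-- Classical Krasovskii method: if `P` is symmetric positive semidefinite, `Q` is
symmetric, and `⟪v, P (Df(x) v)⟫ + ⟪Df(x) v, P v⟫ ≤ −⟪v, Q v⟫` for all `x, v`, then
along any solution of `ẋ = f(x)` the function `V(t) = ⟪f(x(t)), P f(x(t))⟫` is
differentiable with `V'(t) ≤ −⟪f(x(t)), Q f(x(t))⟫`. -/
theorem classical_krasovskii {n : ℕ} (f : E n → E n) (hf : ContDiff ℝ 1 f)
    (P Q : E n →L[ℝ] E n)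
    (hPsymm : ∀ u v : E n, ⟪P u, v⟫ = ⟪u, P v⟫)
    (hPpos : ∀ u : E n, 0 ≤ ⟪P u, u⟫)
    (hQsymm : ∀ u v : E n, ⟪Q u, v⟫ = ⟪u, Q v⟫)
    (hKraso : ∀ x v : E n,
      ⟪v, P (fderiv ℝ f x v)⟫ + ⟪fderiv ℝ f x v, P v⟫ ≤ -⟪v, Q v⟫)
    (s : Set ℝ) (x : ℝ → E n) (hx : ∀ t ∈ s, HasDerivAt x (f (x t)) t) :
    ∀ t ∈ s, ∃ d : ℝ,
      HasDerivAt (fun τ => ⟪f (x τ), P (f (x τ))⟫) d t ∧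
      d ≤ -⟪f (x t), Q (f (x t))⟫ :=
  classical_krasovskii_general f hf P Q hKraso s x hx
end
end

section
/- Let α₁ : ℝ≥0 → ℝ≥0 be a class K∞ function and L > 0, and suppose that for every r ≥ 0 the integral α₃(r) := ∫_0^∞ α₁(r e^{−Ls}) ds is finite. Then α₃(0) = 0, α₃ is strictly increasing on ℝ≥0, α₃(r) ≥ α₁(r e^{−L}) for all r ≥ 0, and α₃(r) → ∞ as r → ∞. -/
/-!
The integrand `α₁ (r e^{-Ls})` is strictly increasing in `r` for every `s`, so the integral is
strictly increasing. On `s ∈ (0, 1]` the integrand is at least `α₁ (r e^{-L})`, and that interval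
has length one, which gives the lower bound; unboundedness is then inherited from `α₁`.
-/

open scoped NNReal
open Filter

noncomputable section

/-- A class `K∞` function: class `K` and unbounded. -/
def ClassKInf (α : ℝ≥0 → ℝ≥0) : Prop :=
  ClassK α ∧ Tendsto α atTop atTop

open MeasureTheory Set

lemma setIntegral_lt_setIntegral_of_forall_lt {X : Type*} [MeasurableSpace X] {μ : Measure X}
    {s : Set X} {f g : X → ℝ} (hs : MeasurableSet s) (hμs : μ s ≠ 0)
    (hf : IntegrableOn f s μ) (hg : IntegrableOn g s μ) (hlt : ∀ x ∈ s, f x < g x) :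
    ∫ x in s, f x ∂μ < ∫ x in s, g x ∂μ := by
  have hsupp : s ⊆ Function.support (fun x => g x - f x) ∩ s :=
    fun x hx => ⟨(sub_pos.mpr (hlt x hx)).ne', hx⟩
  have hpos : 0 < ∫ x in s, (g x - f x) ∂μ := by
    rw [setIntegral_pos_iff_support_of_nonneg_ae
      (ae_restrict_of_forall_mem hs fun x hx => sub_nonneg.mpr (hlt x hx).le) (hg.sub hf)]
    exact (pos_iff_ne_zero.mpr hμs).trans_le (measure_mono hsupp)
  rw [integral_sub hg hf] at hpos
  linarith

lemma tendsto_coe_comp_mul_const_atTop {α : ℝ≥0 → ℝ≥0} (hα : Tendsto α atTop atTop)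
    {c : ℝ≥0} (hc : 0 < c) : Tendsto (fun r => (α (r * c) : ℝ)) atTop atTop :=
  NNReal.tendsto_coe_atTop.mpr (hα.comp (tendsto_id.atTop_mul_const hc))

lemma toNNReal_exp_pos (x : ℝ) : 0 < (Real.exp x).toNNReal :=
  Real.toNNReal_pos.mpr (Real.exp_pos x)

def expDecayIntegral (α : ℝ≥0 → ℝ≥0) (L : ℝ) (r : ℝ≥0) : ℝ :=
  ∫ s in Ioi (0 : ℝ), (α (r * (Real.exp (-L * s)).toNNReal) : ℝ)

section expDecayIntegral

variable {α : ℝ≥0 → ℝ≥0} {L : ℝ}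

lemma expDecayIntegral_zero (h0 : α 0 = 0) : expDecayIntegral α L 0 = 0 := by
  simp [expDecayIntegral, h0]

lemma strictMono_expDecayIntegral (hα : StrictMono α)
    (hint : ∀ r : ℝ≥0, IntegrableOn
      (fun s : ℝ => (α (r * (Real.exp (-L * s)).toNNReal) : ℝ)) (Ioi (0 : ℝ))) :
    StrictMono (expDecayIntegral α L) := fun r r' hrr' =>
  setIntegral_lt_setIntegral_of_forall_lt measurableSet_Ioi (by simp) (hint r) (hint r')
    fun s _ => by exact_mod_cast hα (mul_lt_mul_of_pos_right hrr' (toNNReal_exp_pos _))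

lemma le_expDecayIntegral (hα : Monotone α) (hL : 0 ≤ L) {r : ℝ≥0}
    (hint : IntegrableOn
      (fun s : ℝ => (α (r * (Real.exp (-L * s)).toNNReal) : ℝ)) (Ioi (0 : ℝ))) :
    (α (r * (Real.exp (-L)).toNNReal) : ℝ) ≤ expDecayIntegral α L r := by
  have hle : ∀ s ∈ Ioc (0 : ℝ) 1,
      (α (r * (Real.exp (-L)).toNNReal) : ℝ) ≤ α (r * (Real.exp (-L * s)).toNNReal) := by
    intro s hs
    have hexp : Real.exp (-L) ≤ Real.exp (-L * s) := by
      rw [Real.exp_le_exp, neg_mul, neg_le_neg_iff]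
      exact mul_le_of_le_one_right hL hs.2
    exact_mod_cast hα (mul_le_mul_right (Real.toNNReal_mono hexp) r)
  calc (α (r * (Real.exp (-L)).toNNReal) : ℝ)
      = α (r * (Real.exp (-L)).toNNReal) * volume.real (Ioc (0 : ℝ) 1) := by simp
    _ ≤ ∫ s in Ioc (0 : ℝ) 1, (α (r * (Real.exp (-L * s)).toNNReal) : ℝ) :=
        setIntegral_ge_of_const_le_real measurableSet_Ioc (by simp) hle
          (hint.mono_set Ioc_subset_Ioi_self)
    _ ≤ expDecayIntegral α L r :=
        setIntegral_mono_set hint (Eventually.of_forall fun _ => NNReal.coe_nonneg _)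
          (Eventually.of_forall Ioc_subset_Ioi_self)

end expDecayIntegral

/-- If `α₁` is class `K∞`, `L > 0`, and `α₃(r) = ∫_0^∞ α₁(r e^{−Ls}) ds` is finite for
every `r`, then `α₃(0) = 0`, `α₃` is strictly increasing, `α₃(r) ≥ α₁(r e^{−L})`, and
`α₃(r) → ∞` as `r → ∞`. -/
theorem lower_bound_classKInf (α₁ : ℝ≥0 → ℝ≥0) (hα₁ : ClassKInf α₁)
    (L : ℝ) (hL : 0 < L)
    (hint : ∀ r : ℝ≥0, MeasureTheory.IntegrableOn
      (fun s : ℝ => (α₁ (r * (Real.exp (-L * s)).toNNReal) : ℝ)) (Set.Ioi (0 : ℝ)))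
    (α₃ : ℝ≥0 → ℝ)
    (hα₃ : ∀ r : ℝ≥0,
      α₃ r = ∫ s in Set.Ioi (0 : ℝ), (α₁ (r * (Real.exp (-L * s)).toNNReal) : ℝ)) :
    α₃ 0 = 0 ∧ StrictMono α₃ ∧
    (∀ r : ℝ≥0, (α₁ (r * (Real.exp (-L)).toNNReal) : ℝ) ≤ α₃ r) ∧
    Tendsto α₃ atTop atTop := by
  obtain ⟨⟨-, hmono, h0⟩, htop⟩ := hα₁
  obtain rfl : α₃ = expDecayIntegral α₁ L := funext hα₃
  have hbound := fun r => le_expDecayIntegral hmono.monotone hL.le (hint r)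
  exact ⟨expDecayIntegral_zero h0, strictMono_expDecayIntegral hmono hint, hbound,
    tendsto_atTop_mono hbound (tendsto_coe_comp_mul_const_atTop htop (toNNReal_exp_pos _))⟩
end
end
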